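/- arXiv:2008.10732 — 2 statements merged into one kernel-verified Lean document; each statement's English description precedes it below -/
import Mathlib

section
/- Let p be a prime, n ≥ 1, and fix integers 0 ≤ k_1 ≤ … ≤ k_n with multiplicities m_k = #{i : k_i = k}; let Σ = diag(p^{k_1}, …, p^{k_n}). Let C_Σ = GL_n(ℤ_p) ∩ Σ GL_n(ℤ_p) Σ^{−1}, i.e. the set of γ ∈ GL_n(ℤ_p) such that all entries of Σ^{−1} γ Σ (computed over ℚ_p) lie in ℤ_p; equivalently, γ ∈ GL_n(ℤ_p) with p^{k_i − k_j} dividing γ_{ij} for all i > j. Then μ(C_Σ) = p^{−D(Σ)} · ∏_{k≥0} π_{m_k}, where D(Σ) = ∑_{1 ≤ i < j ≤ n} (k_j − k_i). -/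
open MeasureTheory Matrix

instance matrixMeasurableSpace {m n α : Type*} [MeasurableSpace α] :
    MeasurableSpace (Matrix m n α) := MeasurableSpace.pi

/-- `π_j = ∏_{i=1}^j (1 − p^{−i})`, with `π_0 = 1`. -/
noncomputable def piReal (p j : ℕ) : ℝ := ∏ i ∈ Finset.range j, (1 - ((p : ℝ))⁻¹ ^ (i + 1))

/-!
If `γ ∈ C_Σ`, every entry below the diagonal with `k_j < k_i` is divisible by `p`, so `γ mod p`
is block upper triangular for the level sets of `k`, and `γ` is invertible iff each diagonal
block is invertible mod `p`. Hence `C_Σ` is the preimage, under the additive map recording the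
diagonal blocks mod `p` and each entry `γ_ij` (`j < i`) mod `p^{k_i - k_j}`, of
`∏_t GL_{m_t}(𝔽_p) × {0}`. That map is surjective onto a finite group, so by translation
invariance of Haar measure the measure of a preimage is its relative cardinality:
`∏_t |GL_{m_t}(𝔽_p)| / p^{m_t²}` times `p^{-∑ (k_i - k_j)}`, and `|GL_m(𝔽_p)| = π_m p^{m²}`.
-/

open Finset
open scoped ENNReal

instance Matrix.instMeasurableAdd {m n α : Type*} [MeasurableSpace α] [Add α] [MeasurableAdd α] :
    MeasurableAdd (Matrix m n α) :=
  inferInstanceAs (MeasurableAdd (m → n → α))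

theorem AddMonoidHom.preimage_singleton_eq_preimage_ker {G H : Type*} [AddGroup G] [AddGroup H]
    (Φ : G →+ H) (g : G) : Φ ⁻¹' {Φ g} = (-g + ·) ⁻¹' (Φ ⁻¹' {0}) := by
  ext x
  simp only [Set.mem_preimage, Set.mem_singleton_iff, map_add, map_neg, neg_add_eq_zero]
  exact eq_comm

section HaarFibers

variable {G H : Type*} [AddGroup G] [MeasurableSpace G] [MeasurableAdd G] [AddGroup H]
  (μ : Measure G) [μ.IsAddLeftInvariant] (Φ : G →+ H)

theorem measure_preimage_eq_card_mul_measure_ker (hΦ : Function.Surjective Φ)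
    (hker : MeasurableSet (Φ ⁻¹' {0})) (S : Finset H) :
    μ (Φ ⁻¹' S) = S.card * μ (Φ ⁻¹' {0}) := by
  rw [← Set.biUnion_preimage_singleton, set_biUnion_coe, measure_biUnion_finset]
  · refine (sum_congr rfl fun h _ => ?_).trans (by rw [sum_const, nsmul_eq_mul])
    obtain ⟨g, rfl⟩ := hΦ h
    rw [Φ.preimage_singleton_eq_preimage_ker, measure_preimage_add]
  · exact fun a _ b _ hab => (Set.disjoint_singleton.mpr hab).preimage Φ
  · intro h _
    obtain ⟨g, rfl⟩ := hΦ h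
    rw [Φ.preimage_singleton_eq_preimage_ker]
    exact hker.preimage (measurable_const_add _)

theorem measure_preimage_eq_card_div_card [IsProbabilityMeasure μ] [Fintype H]
    (hΦ : Function.Surjective Φ) (hker : MeasurableSet (Φ ⁻¹' {0})) (S : Finset H) :
    μ (Φ ⁻¹' S) = S.card / Fintype.card H := by
  have hker_mul : μ (Φ ⁻¹' {0}) * Fintype.card H = 1 := by
    simpa [mul_comm] using (measure_preimage_eq_card_mul_measure_ker μ Φ hΦ hker univ).symm
  rw [measure_preimage_eq_card_mul_measure_ker μ Φ hΦ hker,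
    ENNReal.eq_inv_of_mul_eq_one_left hker_mul, div_eq_mul_inv]

end HaarFibers

theorem natCast_prod_range_pow_sub_pow {q : ℕ} (hq : 0 < q) (m : ℕ) :
    ((∏ i ∈ range m, (q ^ m - q ^ i) : ℕ) : ℝ) = piReal q m * (q : ℝ) ^ (m * m) := by
  have hfactor : ∀ i ∈ range m, (((q ^ m - q ^ (m - 1 - i) : ℕ)) : ℝ) =
      (1 - (q : ℝ)⁻¹ ^ (i + 1)) * (q : ℝ) ^ m := by
    intro i hi
    have hm : (q : ℝ) ^ m = q ^ (i + 1) * q ^ (m - 1 - i) := by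
      rw [← pow_add]; congr 1; have := mem_range.mp hi; omega
    rw [Nat.cast_sub (Nat.pow_le_pow_right hq (by omega)), Nat.cast_pow, Nat.cast_pow, hm]
    have hq' : (q : ℝ) ≠ 0 := by positivity
    rw [inv_pow, sub_mul, one_mul, inv_mul_cancel_left₀ (pow_ne_zero _ hq')]
  rw [Nat.cast_prod, ← prod_range_reflect, prod_congr rfl hfactor, prod_mul_distrib, prod_const,
    card_range, ← pow_mul, piReal]

theorem natCard_isUnit_det {𝔽 ι : Type*} [Field 𝔽] [Fintype 𝔽] [Fintype ι] [DecidableEq ι] :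
    (Nat.card {B : Matrix ι ι 𝔽 // IsUnit B.det} : ℝ) =
      piReal (Fintype.card 𝔽) (Fintype.card ι) *
        (Fintype.card 𝔽 : ℝ) ^ (Fintype.card ι * Fintype.card ι) := by
  let toUnits : {B : Matrix ι ι 𝔽 // IsUnit B.det} ≃ (Matrix ι ι 𝔽)ˣ :=
    { toFun B := ((isUnit_iff_isUnit_det B.1).mpr B.2).unit
      invFun u := ⟨u, (isUnit_iff_isUnit_det _).mp u.isUnit⟩
      left_inv _ := rfl
      right_inv _ := Units.ext rfl }
  rw [Nat.card_congr (toUnits.trans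
      (Units.mapEquiv (reindexAlgEquiv 𝔽 𝔽 (Fintype.equivFin ι)).toMulEquiv).toEquiv),
    ← GeneralLinearGroup, card_GL_field,
    Fin.prod_univ_eq_prod_range (fun i => Fintype.card 𝔽 ^ Fintype.card ι - Fintype.card 𝔽 ^ i),
    natCast_prod_range_pow_sub_pow Fintype.card_pos]

namespace PadicInt

variable {p : ℕ} [Fact p.Prime]

theorem toZModPow_eq_zero_iff_dvd {d : ℕ} {x : ℤ_[p]} :
    toZModPow d x = 0 ↔ (p : ℤ_[p]) ^ d ∣ x := by
  rw [← RingHom.mem_ker, ker_toZModPow, Ideal.mem_span_singleton]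

theorem toZMod_eq_zero_iff_dvd {x : ℤ_[p]} : toZMod x = 0 ↔ (p : ℤ_[p]) ∣ x := by
  rw [← RingHom.mem_ker, ker_toZMod, maximalIdeal_eq_span_p, Ideal.mem_span_singleton]

theorem isUnit_iff_toZMod_ne_zero {x : ℤ_[p]} : IsUnit x ↔ toZMod x ≠ 0 := by
  rw [Ne, ← RingHom.mem_ker, ker_toZMod, IsLocalRing.mem_maximalIdeal, mem_nonunits_iff, not_not]

theorem measurableSet_setOf_pow_dvd [MeasurableSpace ℤ_[p]] [BorelSpace ℤ_[p]] (d : ℕ) :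
    MeasurableSet {x : ℤ_[p] | (p : ℤ_[p]) ^ d ∣ x} := by
  convert (measurableSet_closedBall (x := (0 : ℤ_[p])) (ε := (p : ℝ) ^ (-(d : ℤ))))
  ext x
  rw [Set.mem_ofPred_eq, Metric.mem_closedBall, dist_zero_right, norm_le_pow_iff_mem_span_pow,
    Ideal.mem_span_singleton]

theorem isUnit_det_iff_of_blockTriangular {m α : Type*} [Fintype m] [DecidableEq m]
    [LinearOrder α] {γ : Matrix m m ℤ_[p]} {b : m → α}
    (hγ : (γ.map toZMod).BlockTriangular b) :
    IsUnit γ.det ↔ ∀ t ∈ univ.image b, IsUnit ((γ.toSquareBlock b t).map toZMod).det := by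
  simp_rw [isUnit_iff_toZMod_ne_zero, RingHom.map_det, RingHom.mapMatrix_apply, hγ.det,
    prod_ne_zero_iff, isUnit_iff_ne_zero]
  rfl

theorem blockTriangular_map_toZMod {m : Type*} [LinearOrder m] {γ : Matrix m m ℤ_[p]}
    {k : m → ℕ} (hk : Monotone k) (hγ : ∀ i j, j < i → (p : ℤ_[p]) ^ (k i - k j) ∣ γ i j) :
    (γ.map toZMod).BlockTriangular k := fun i j hij =>
  toZMod_eq_zero_iff_dvd.mpr <|
    (dvd_pow_self _ (Nat.sub_ne_zero_of_lt hij)).trans (hγ i j (hk.reflect_lt hij))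

end PadicInt

open PadicInt

section ResidueData

variable (p : ℕ) {n : ℕ} (k : Fin n → ℕ)

/-- Residues of a matrix `γ`: its diagonal blocks mod `p`, and each entry `γ i j` with `j < i`
mod `p ^ (k i - k j)`, indexed by `q = (j, i)`. -/
abbrev ResidueData :=
  (Π t : univ.image k, Matrix {i // k i = t} {i // k i = t} (ZMod p)) ×
    (Π q : {q : Fin n × Fin n // q.1 < q.2}, ZMod (p ^ (k q.1.2 - k q.1.1)))

theorem tprod_piReal_card_fiber :
    ∏' t : ℕ, piReal p (univ.filter fun i => k i = t).card =
      ∏ t : univ.image k, piReal p (Fintype.card {i // k i = t}) := by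
  rw [tprod_eq_prod (s := univ.image k), ← prod_coe_sort]
  · simp_rw [Fintype.card_subtype]
  · intro t ht
    rw [filter_eq_empty_iff.mpr fun i _ (hi : k i = t) => ht (hi ▸ mem_image_of_mem k (mem_univ i)),
      card_empty, piReal, range_zero, prod_empty]

variable [NeZero p]

open scoped Classical in
noncomputable def residueUnits : Finset (ResidueData p k) :=
  Fintype.piFinset (fun _ => univ.filter fun B => IsUnit B.det) ×ˢ {0}

theorem card_residueData :
    (Fintype.card (ResidueData p k) : ℝ) =
      (∏ t : univ.image k, (p : ℝ) ^ (Fintype.card {i // k i = t} * Fintype.card {i // k i = t})) *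
        (p : ℝ) ^ ∑ q ∈ univ.filter (fun q : Fin n × Fin n => q.1 < q.2), (k q.2 - k q.1) := by
  have hblock (t : univ.image k) :
      Nat.card (Matrix {i // k i = t} {i // k i = t} (ZMod p)) =
        p ^ (Fintype.card {i // k i = t} * Fintype.card {i // k i = t}) := by
    change Nat.card (_ → _ → _) = _
    rw [Nat.card_fun, Nat.card_fun, Nat.card_zmod, Nat.card_eq_fintype_card, pow_mul]
  rw [← Nat.card_eq_fintype_card, Nat.card_prod, Nat.card_pi, Nat.card_pi, Nat.cast_mul,
    Nat.cast_prod, Nat.cast_prod, sum_subtype (F := inferInstance) _ (fun q => mem_filter_univ q),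
    ← prod_pow_eq_pow_sum]
  simp only [hblock, Nat.card_zmod, Nat.cast_pow]

end ResidueData

section ResidueMap

variable (p : ℕ) [Fact p.Prime] {n : ℕ} (k : Fin n → ℕ)

theorem card_residueUnits :
    ((residueUnits p k).card : ℝ) = ∏ t : univ.image k, piReal p (Fintype.card {i // k i = t}) *
      (p : ℝ) ^ (Fintype.card {i // k i = t} * Fintype.card {i // k i = t}) := by
  classical
  rw [residueUnits, card_product, Fintype.card_piFinset, card_singleton, mul_one, Nat.cast_prod]
  refine prod_congr rfl fun t _ => ?_
  rw [← Fintype.card_subtype, ← Nat.card_eq_fintype_card, natCard_isUnit_det, ZMod.card]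

noncomputable def residueMap : Matrix (Fin n) (Fin n) ℤ_[p] →+ ResidueData p k :=
  AddMonoidHom.mk' (fun γ => (fun t => (γ.toSquareBlock k t).map toZMod,
      fun q => toZModPow _ (γ q.1.2 q.1.1)))
    (fun γ δ => by ext <;> simp [toSquareBlock_def])

theorem residueMap_surjective : Function.Surjective (residueMap p k) := by
  rintro ⟨B, c⟩
  let liftBlock (a : ZMod p) : ℤ_[p] := Function.surjInv (ZMod.ringHom_surjective toZMod) a
  let liftEntry {d : ℕ} (a : ZMod (p ^ d)) : ℤ_[p] :=
    Function.surjInv (ZMod.ringHom_surjective (toZModPow d)) a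
  refine ⟨Matrix.of fun i j =>
    if h : k i = k j then liftBlock (B ⟨k i, mem_image_of_mem k (mem_univ i)⟩ ⟨i, rfl⟩ ⟨j, h.symm⟩)
    else if h' : j < i then liftEntry (c ⟨(j, i), h'⟩) else 0, ?_⟩
  refine Prod.ext (funext ?_) (funext ?_)
  · rintro ⟨t, ht⟩
    ext ⟨i, hi⟩ ⟨j, hj⟩
    change k i = t at hi
    subst hi
    simp [residueMap, toSquareBlock_def, dif_pos hj.symm, liftBlock, Function.surjInv_eq]
  · rintro ⟨⟨j, i⟩, hji⟩
    by_cases h : k i = k j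
    -- an entry lying in a diagonal block is only recorded modulo `p ^ 0`
    · have : Subsingleton (ZMod (p ^ (k i - k j))) := by
        rw [h, Nat.sub_self, pow_zero]; infer_instance
      exact Subsingleton.elim _ _
    · simp [residueMap, dif_neg h, dif_pos hji, liftEntry, Function.surjInv_eq]

theorem measurableSet_ker_residueMap [MeasurableSpace ℤ_[p]] [BorelSpace ℤ_[p]] :
    MeasurableSet (residueMap p k ⁻¹' {0}) := by
  have hker : residueMap p k ⁻¹' {0} =
      (⋂ (t : univ.image k) (i : {i // k i = t}) (j : {i // k i = t}),
        (fun γ : Matrix (Fin n) (Fin n) ℤ_[p] => γ i j) ⁻¹' {x | (p : ℤ_[p]) ^ 1 ∣ x}) ∩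
      ⋂ q : {q : Fin n × Fin n // q.1 < q.2},
        (fun γ : Matrix (Fin n) (Fin n) ℤ_[p] => γ q.1.2 q.1.1) ⁻¹'
          {x | (p : ℤ_[p]) ^ (k q.1.2 - k q.1.1) ∣ x} := by
    ext γ
    simp [residueMap, funext_iff, ← Matrix.ext_iff, toSquareBlock_def, toZMod_eq_zero_iff_dvd,
      toZModPow_eq_zero_iff_dvd]
  rw [hker]
  refine .inter (.iInter fun t => .iInter fun i => .iInter fun j => ?_) (.iInter fun q => ?_) <;>
    exact (measurable_pi_apply _).comp (measurable_pi_apply _) (measurableSet_setOf_pow_dvd _)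

theorem setOf_stabiliser_eq_preimage_residueMap (hk : Monotone k) :
    {γ : Matrix (Fin n) (Fin n) ℤ_[p] | IsUnit γ.det ∧
        ∀ i j : Fin n, j < i → (p : ℤ_[p]) ^ (k i - k j) ∣ γ i j} =
      residueMap p k ⁻¹' ↑(residueUnits p k) := by
  ext γ
  have hlower : (residueMap p k γ).2 = 0 ↔
      ∀ i j : Fin n, j < i → (p : ℤ_[p]) ^ (k i - k j) ∣ γ i j := by
    simp only [residueMap, AddMonoidHom.mk'_apply, funext_iff, Pi.zero_apply,
      toZModPow_eq_zero_iff_dvd, Subtype.forall, Prod.forall]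
    exact ⟨fun h i j hji => h j i hji, fun h j i hji => h i j hji⟩
  simp only [Set.mem_ofPred_eq, Set.mem_preimage, residueUnits, coe_product, Set.mem_prod,
    coe_singleton, Set.mem_singleton_iff, Fintype.coe_piFinset, Set.mem_pi, Set.mem_univ,
    true_imp_iff, coe_filter, mem_univ, true_and]
  rw [hlower]
  refine and_congr_left fun hγ => ?_
  rw [isUnit_det_iff_of_blockTriangular (blockTriangular_map_toZMod hk hγ)]
  exact ⟨fun h t => h t t.2, fun h t ht => h ⟨t, ht⟩⟩

end ResidueMap

theorem stabiliser_measure_general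
    (p : ℕ) [Fact p.Prime] (n : ℕ)
    [MeasurableSpace ℤ_[p]] [BorelSpace ℤ_[p]]
    (ν : Measure ℤ_[p]) [ν.IsAddHaarMeasure] [IsProbabilityMeasure ν]
    (k : Fin n → ℕ) (hk : Monotone k) :
    Measure.pi (fun _ : Fin n => Measure.pi fun _ : Fin n => ν)
      {γ : Matrix (Fin n) (Fin n) ℤ_[p] | IsUnit γ.det ∧
        ∀ i j : Fin n, j < i → (p : ℤ_[p]) ^ (k i - k j) ∣ γ i j} =
    ENNReal.ofReal
      (((p : ℝ))⁻¹ ^ (∑ q ∈ Finset.univ.filter (fun q : Fin n × Fin n => q.1 < q.2),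
          (k q.2 - k q.1)) *
        ∏' t : ℕ, piReal p ((Finset.univ.filter fun i => k i = t).card)) := by
  let μ : Measure (Matrix (Fin n) (Fin n) ℤ_[p]) := Measure.pi fun _ => Measure.pi fun _ => ν
  have : μ.IsAddLeftInvariant := Measure.pi.isAddLeftInvariant _
  have : IsProbabilityMeasure μ := Measure.pi.instIsProbabilityMeasure _
  refine (congrArg μ (setOf_stabiliser_eq_preimage_residueMap p k hk)).trans ?_
  rw [measure_preimage_eq_card_div_card μ _ (residueMap_surjective p k)
      (measurableSet_ker_residueMap p k),
    ← ENNReal.ofReal_natCast, ← ENNReal.ofReal_natCast,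
    ← ENNReal.ofReal_div_of_pos (Nat.cast_pos.mpr Fintype.card_pos), card_residueUnits,
    card_residueData, tprod_piReal_card_fiber, prod_mul_distrib]
  have hp : (p : ℝ) ≠ 0 := by exact_mod_cast (Fact.out : p.Prime).ne_zero
  congr 1
  rw [inv_pow]
  field_simp

/-- Lemma 2.3: for `Σ = diag(p^{k_1}, …, p^{k_n})` with `0 ≤ k_1 ≤ … ≤ k_n` and
multiplicities `m_k = #{i : k_i = k}`, the measure of
`C_Σ = GL_n(ℤ_p) ∩ Σ GL_n(ℤ_p) Σ^{−1}` — i.e. of the set of `γ ∈ GL_n(ℤ_p)` with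
`p^{k_i − k_j} ∣ γ_{ij}` for all `i > j` — equals `p^{−D(Σ)} ∏_k π_{m_k}`, where
`D(Σ) = ∑_{i<j} (k_j − k_i)`. -/
theorem stabiliser_measure
    (p : ℕ) [Fact p.Prime] (n : ℕ) (hn : 1 ≤ n)
    [MeasurableSpace ℤ_[p]] [BorelSpace ℤ_[p]]
    (ν : Measure ℤ_[p]) [ν.IsAddHaarMeasure] [IsProbabilityMeasure ν]
    (k : Fin n → ℕ) (hk : Monotone k) :
    Measure.pi (fun _ : Fin n => Measure.pi fun _ : Fin n => ν)
      {γ : Matrix (Fin n) (Fin n) ℤ_[p] | IsUnit γ.det ∧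
        ∀ i j : Fin n, j < i → (p : ℤ_[p]) ^ (k i - k j) ∣ γ i j} =
    ENNReal.ofReal
      (((p : ℝ))⁻¹ ^ (∑ q ∈ Finset.univ.filter (fun q : Fin n × Fin n => q.1 < q.2),
          (k q.2 - k q.1)) *
        ∏' t : ℕ, piReal p ((Finset.univ.filter fun i => k i = t).card)) :=
  stabiliser_measure_general p n ν k hk
end

section
/- Let p be an odd prime, n ≥ 1, k ≥ 1, and let a be an integer coprime to p. Let S_k denote the n×n diagonal matrix over ℤ/p^kℤ with diagonal entries (1, …, 1, a mod p^k), and S_1 the corresponding matrix over ℤ/pℤ. Then the number of n×n matrices U over ℤ/p^kℤ satisfying U S_k Uᵀ = S_k equals p^{(k−1)n(n−1)/2} times the number of n×n matrices U over ℤ/pℤ satisfying U S_1 Uᵀ = S_1. Consequently the density |{U : U S_k Uᵀ = S_k}| / p^{k n(n−1)/2} is independent of k. -/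
/-!
Reduction modulo `p ^ k` maps the isometries of `S` over `ℤ/p^(k+1)` to those over `ℤ/p^k`, and
every fibre has `p ^ (n(n-1)/2)` elements. If `A` is any matrix lifting an isometry `U`, the lifts
of `U` are the `A + X` with `X ≡ 0 mod p^k`. As the kernel of the reduction squares to zero,
`X S Xᵀ = 0` and the isometry condition becomes linear: `Y + Yᵀ = S - A S Aᵀ` for `Y = X (S Aᵀ)`,
where `S Aᵀ` is invertible. Since `p` is odd, such `Y` are parametrised by their strictly lower
entries, which range freely over the kernel `p^k ℤ/p^(k+1) ≅ ℤ/p`.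
-/

open Matrix

section LowerTriangle

variable {R M : Type*} [Ring R] [AddCommGroup M] [Module R M] {n : ℕ}

lemma IsUnit.val_inv_smul_add_self (h2 : IsUnit (2 : R)) (x : M) :
    (↑h2.unit⁻¹ : R) • (x + x) = x := by
  rw [← two_smul R x, smul_smul, IsUnit.val_inv_mul, one_smul]

noncomputable def addTransposeEqEquiv (h2 : IsUnit (2 : R)) (N : Submodule R M)
    {C : Matrix (Fin n) (Fin n) M} (hC : Cᵀ = C) (hCN : ∀ i j, C i j ∈ N) :
    {Y : Matrix (Fin n) (Fin n) M // (∀ i j, Y i j ∈ N) ∧ Y + Yᵀ = C} ≃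
      ((i : Fin n) → Fin i → N) where
  toFun Y i j := ⟨Y.1 i (Fin.castLT j (j.2.trans i.2)), Y.2.1 _ _⟩
  invFun g :=
    ⟨of fun i j => if h : j < i then g i ⟨j, h⟩ else if h' : i < j then C i j - g j ⟨i, h'⟩
      else (↑h2.unit⁻¹ : R) • C i j,
    fun i j => by
      simp only [of_apply]
      split_ifs
      exacts [(g _ _).2, N.sub_mem (hCN i j) (g _ _).2, N.smul_mem _ (hCN i j)],
    by
      ext i j
      have hCji : C j i = C i j := congrFun (congrFun hC i) j
      rcases lt_trichotomy j i with h | rfl | h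
      · simp [h, h.not_gt, hCji]
      · simp [← smul_add, h2.val_inv_smul_add_self]
      · simp [h, h.not_gt]⟩
  left_inv := by
    rintro ⟨Y, hYN, hY⟩
    have hYC : ∀ i j, Y i j + Y j i = C i j := fun i j => congrFun (congrFun hY i) j
    ext i j
    rcases lt_trichotomy j i with h | rfl | h
    · simp [h]
    · simp [← hYC, -smul_add, h2.val_inv_smul_add_self]
    · simp [h, h.not_gt, ← hYC]
  right_inv g := by
    ext i j
    exact dif_pos (show Fin.castLT j _ < i from j.2)

end LowerTriangle

lemma Nat.card_pi_fin_fun (α : Type*) (n : ℕ) :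
    Nat.card ((i : Fin n) → Fin i → α) = Nat.card α ^ (n * (n - 1) / 2) := by
  simp [Nat.card_pi, Finset.prod_pow_eq_pow_sum, Fin.sum_univ_eq_sum_range (fun i => i) n,
    Finset.sum_range_id]

lemma RingHom.card_ker_mul_card_of_surjective {R R' : Type*} [Ring R] [Ring R'] (f : R →+* R')
    (hf : Function.Surjective f) : Nat.card (RingHom.ker f) * Nat.card R' = Nat.card R := by
  have := (f : R →+ R').ker.card_mul_index
  rwa [AddSubgroup.index_ker, AddMonoidHom.range_eq_top.mpr hf, AddSubgroup.card_top] at this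

lemma Matrix.isUnit_of_mul_mul_transpose_eq {R : Type*} [CommRing R] {n : Type*} [Fintype n]
    [DecidableEq n] {U S : Matrix n n R} (hS : IsUnit S) (h : U * S * Uᵀ = S) : IsUnit U := by
  rw [isUnit_iff_isUnit_det] at hS ⊢
  have hdet := congrArg det h
  rw [det_mul, det_mul, det_transpose] at hdet
  rw [← hdet] at hS
  exact isUnit_of_mul_isUnit_left (isUnit_of_mul_isUnit_left hS)

section SquareZeroLift

variable {R R' : Type*} [CommRing R] [CommRing R'] {f : R →+* R'}

lemma isUnit_of_isUnit_map_of_ker_mul_ker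
    (hsq : ∀ x ∈ RingHom.ker f, ∀ y ∈ RingHom.ker f, x * y = 0) (hf : Function.Surjective f) {x : R}
    (hx : IsUnit (f x)) : IsUnit x := by
  obtain ⟨y, hy⟩ := hf ↑hx.unit⁻¹
  have hker : x * y - 1 ∈ RingHom.ker f := by simp [RingHom.mem_ker, hy]
  have hnil : IsNilpotent (x * y - 1) := ⟨2, by rw [sq]; exact hsq _ hker _ hker⟩
  exact isUnit_of_mul_isUnit_left (by simpa using hnil.isUnit_one_add)

variable {n : Type*}

lemma Matrix.map_eq_zero_iff_mem_ker {X : Matrix n n R} :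
    X.map f = 0 ↔ ∀ i j, X i j ∈ RingHom.ker f := by
  simp [← Matrix.ext_iff, RingHom.mem_ker]

variable [Fintype n]

lemma Matrix.mul_mul_transpose_eq_zero_of_map_eq_zero
    (hsq : ∀ x ∈ RingHom.ker f, ∀ y ∈ RingHom.ker f, x * y = 0) {X Y : Matrix n n R}
    (hX : X.map f = 0) (hY : Y.map f = 0) (S : Matrix n n R) : X * S * Yᵀ = 0 := by
  ext i j
  simp only [mul_apply, transpose_apply, Matrix.zero_apply, Finset.sum_mul]
  refine Finset.sum_eq_zero fun l _ => Finset.sum_eq_zero fun m _ => ?_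
  rw [mul_right_comm, hsq _ (map_eq_zero_iff_mem_ker.mp hX i m) _
    (map_eq_zero_iff_mem_ker.mp hY j l), zero_mul]

lemma Matrix.add_mul_mul_transpose_add_eq_iff
    (hsq : ∀ x ∈ RingHom.ker f, ∀ y ∈ RingHom.ker f, x * y = 0) {S : Matrix n n R} (hS : Sᵀ = S)
    (A : Matrix n n R) {X : Matrix n n R} (hX : X.map f = 0) :
    (A + X) * S * (A + X)ᵀ = S ↔ X * (S * Aᵀ) + (X * (S * Aᵀ))ᵀ = S - A * S * Aᵀ := by
  have hXX := mul_mul_transpose_eq_zero_of_map_eq_zero hsq hX hX S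
  have expand : (A + X) * S * (A + X)ᵀ = A * S * Aᵀ + (X * (S * Aᵀ) + (X * (S * Aᵀ))ᵀ) := by
    simp only [transpose_add, transpose_mul, transpose_transpose, hS, add_mul, mul_add, hXX,
      Matrix.mul_assoc]
    abel
  rw [expand, eq_sub_iff_add_eq']

lemma Matrix.map_mul_unit_eq_zero_iff [DecidableEq n] {X : Matrix n n R} (T : (Matrix n n R)ˣ) :
    (X * T).map f = 0 ↔ X.map f = 0 := by
  refine ⟨fun h => ?_, fun h => by rw [Matrix.map_mul, h, Matrix.zero_mul]⟩
  rw [← Units.mul_inv_cancel_right X T, Matrix.map_mul, h, Matrix.zero_mul]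

noncomputable def isometryFiberEquiv {m : ℕ}
    (hsq : ∀ x ∈ RingHom.ker f, ∀ y ∈ RingHom.ker f, x * y = 0) (hf : Function.Surjective f)
    (h2 : IsUnit (2 : R)) {S : Matrix (Fin m) (Fin m) R} (hS : Sᵀ = S) (hSu : IsUnit S)
    {U : Matrix (Fin m) (Fin m) R'} (hU : U * S.map f * Uᵀ = S.map f) :
    {V : Matrix (Fin m) (Fin m) R // V * S * Vᵀ = S ∧ V.map f = U} ≃
      ((i : Fin m) → Fin i → RingHom.ker f) :=
  let A := U.map (Function.surjInv hf)
  have hA : A.map f = U := by ext; simp [A, Function.surjInv_eq hf]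
  have hAu : IsUnit A := by
    rw [isUnit_iff_isUnit_det]
    refine isUnit_of_isUnit_map_of_ker_mul_ker hsq hf ?_
    rw [RingHom.map_det, RingHom.mapMatrix_apply, hA, ← isUnit_iff_isUnit_det]
    exact isUnit_of_mul_mul_transpose_eq (hSu.map f.mapMatrix) hU
  let T := (hSu.mul ((isUnit_transpose _).mpr hAu)).unit
  have hD : (S - A * S * Aᵀ)ᵀ = S - A * S * Aᵀ := by
    simp [transpose_sub, transpose_mul, hS, Matrix.mul_assoc]
  have hDker : ∀ i j, (S - A * S * Aᵀ) i j ∈ RingHom.ker f := map_eq_zero_iff_mem_ker.mp <| by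
    rw [Matrix.map_sub _ (map_sub f), Matrix.map_mul, Matrix.map_mul, transpose_map, hA, hU,
      sub_self]
  (Equiv.subtypeEquiv ((Equiv.subRight A).trans (Units.mulRight T)) fun V => by
      have hX : V.map f = U ↔ (V - A).map f = 0 := by
        rw [Matrix.map_sub _ (map_sub f), hA, sub_eq_zero]
      rw [hX, ← map_mul_unit_eq_zero_iff T, map_eq_zero_iff_mem_ker]
      refine and_comm.trans (and_congr_right fun h => ?_)
      change _ ↔ (V - A) * (S * Aᵀ) + ((V - A) * (S * Aᵀ))ᵀ = _
      rw [← add_mul_mul_transpose_add_eq_iff hsq hS A ((map_mul_unit_eq_zero_iff T).mp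
        (map_eq_zero_iff_mem_ker.mpr h)), add_sub_cancel]).trans
    (addTransposeEqEquiv h2 (RingHom.ker f) hD hDker)

theorem card_isometry_eq_mul {m : ℕ}
    (hsq : ∀ x ∈ RingHom.ker f, ∀ y ∈ RingHom.ker f, x * y = 0) (hf : Function.Surjective f)
    (h2 : IsUnit (2 : R)) {S : Matrix (Fin m) (Fin m) R} (hS : Sᵀ = S) (hSu : IsUnit S) :
    Nat.card {V : Matrix (Fin m) (Fin m) R // V * S * Vᵀ = S} =
      Nat.card {U : Matrix (Fin m) (Fin m) R' // U * S.map f * Uᵀ = S.map f} *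
        Nat.card (RingHom.ker f) ^ (m * (m - 1) / 2) := by
  let red (V : {V : Matrix (Fin m) (Fin m) R // V * S * Vᵀ = S}) :
      {U : Matrix (Fin m) (Fin m) R' // U * S.map f * Uᵀ = S.map f} :=
    ⟨V.1.map f, by simpa only [Matrix.map_mul, transpose_map] using congrArg (·.map f) V.2⟩
  let fiber (U) : {V // red V = U} ≃ ((i : Fin m) → Fin i → RingHom.ker f) :=
    ((Equiv.subtypeEquivRight fun _ => Subtype.ext_iff).trans
      (Equiv.subtypeSubtypeEquivSubtypeInter _ fun V : Matrix (Fin m) (Fin m) R =>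
        V.map f = U.1)).trans (isometryFiberEquiv hsq hf h2 hS hSu U.2)
  rw [Nat.card_congr ((Equiv.sigmaFiberEquiv red).symm.trans (Equiv.sigmaEquivProdOfEquiv fiber)),
    Nat.card_prod, Nat.card_pi_fin_fun]

end SquareZeroLift

section ZModPrimePow

variable {p : ℕ}

lemma ZMod.mul_eq_zero_of_mem_ker_castHom_pow_succ {k : ℕ} (hk : 1 ≤ k) :
    ∀ x ∈ RingHom.ker (ZMod.castHom (pow_dvd_pow p k.le_succ) (ZMod (p ^ k))),
    ∀ y ∈ RingHom.ker (ZMod.castHom (pow_dvd_pow p k.le_succ) (ZMod (p ^ k))), x * y = 0 := by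
  intro x hx y hy
  rw [RingHom.mem_ker, ← ZMod.intCast_zmod_cast x, map_intCast,
    ZMod.intCast_zmod_eq_zero_iff_dvd] at hx
  rw [RingHom.mem_ker, ← ZMod.intCast_zmod_cast y, map_intCast,
    ZMod.intCast_zmod_eq_zero_iff_dvd] at hy
  rw [← ZMod.intCast_zmod_cast x, ← ZMod.intCast_zmod_cast y, ← Int.cast_mul,
    ZMod.intCast_zmod_eq_zero_iff_dvd]
  push_cast at hx hy ⊢
  exact (pow_dvd_pow _ (by omega : k + 1 ≤ k + k)).trans (pow_add (p : ℤ) k k ▸ mul_dvd_mul hx hy)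

lemma ZMod.card_ker_castHom_pow_succ (hp : p ≠ 0) (k : ℕ) :
    Nat.card (RingHom.ker (ZMod.castHom (pow_dvd_pow p k.le_succ) (ZMod (p ^ k)))) = p := by
  have h := RingHom.card_ker_mul_card_of_surjective _
    (ZMod.castHom_surjective (pow_dvd_pow p k.le_succ))
  rw [Nat.card_zmod, Nat.card_zmod] at h
  exact Nat.eq_of_mul_eq_mul_left (Nat.pos_of_ne_zero (pow_ne_zero k hp))
    (by rw [mul_comm, h, pow_succ])

lemma ZMod.isUnit_two_of_odd (hp : Odd p) (k : ℕ) : IsUnit (2 : ZMod (p ^ k)) := by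
  simpa using (ZMod.isUnit_iff_coprime 2 (p ^ k)).mpr (Nat.coprime_two_left.mpr hp.pow)

lemma ZMod.isUnit_map_intCast_of_isCoprime_det {n : Type*} [Fintype n] [DecidableEq n]
    {S : Matrix n n ℤ} {m : ℕ} (h : IsCoprime S.det m) :
    IsUnit (S.map (Int.cast : ℤ → ZMod m)) := by
  rw [isUnit_iff_isUnit_det, ← Int.cast_det]
  exact (ZMod.coe_int_isUnit_iff_isCoprime _ _).mpr h.symm

theorem card_isometry_zmod_prime_pow [hp : Fact p.Prime] (hp2 : p ≠ 2) {n : ℕ}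
    {S : Matrix (Fin n) (Fin n) ℤ} (hS : Sᵀ = S) (hdet : IsCoprime S.det p) {k : ℕ} (hk : 1 ≤ k) :
    Nat.card {U : Matrix (Fin n) (Fin n) (ZMod (p ^ k)) //
        U * S.map Int.cast * Uᵀ = S.map Int.cast} =
      p ^ ((k - 1) * (n * (n - 1) / 2)) *
        Nat.card {U : Matrix (Fin n) (Fin n) (ZMod p) //
          U * S.map Int.cast * Uᵀ = S.map Int.cast} := by
  induction k, hk using Nat.le_induction with
  | base => rw [Nat.sub_self, zero_mul, pow_zero, one_mul, pow_one]
  | succ k hk ih =>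
    let f := ZMod.castHom (pow_dvd_pow p k.le_succ) (ZMod (p ^ k))
    have hmap : (S.map (Int.cast : ℤ → ZMod (p ^ (k + 1)))).map f = S.map Int.cast := by
      simp [Matrix.map_map, Function.comp_def, f]
    have step := card_isometry_eq_mul (ZMod.mul_eq_zero_of_mem_ker_castHom_pow_succ hk)
      (ZMod.castHom_surjective _) (ZMod.isUnit_two_of_odd (hp.out.odd_of_ne_two hp2) _)
      (by rw [← transpose_map, hS]) (ZMod.isUnit_map_intCast_of_isCoprime_det (S := S)
        (by push_cast; exact hdet.pow_right))
    rw [hmap, ZMod.card_ker_castHom_pow_succ hp.out.ne_zero, ih] at step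
    obtain ⟨j, rfl⟩ := Nat.exists_eq_add_of_le' hk
    rw [step, Nat.add_sub_cancel, Nat.add_sub_cancel]
    ring

end ZModPrimePow

theorem orthogonal_group_lifting_general
    (p : ℕ) [Fact p.Prime] (hp : p ≠ 2) (n k : ℕ) (hk : 1 ≤ k)
    (a : ℤ) (ha : IsCoprime a (p : ℤ)) :
    (Nat.card {U : Matrix (Fin n) (Fin n) (ZMod (p ^ k)) //
        U * Matrix.diagonal (fun i : Fin n => if (i : ℕ) = n - 1 then (a : ZMod (p ^ k)) else 1) * Uᵀ =
          Matrix.diagonal (fun i : Fin n => if (i : ℕ) = n - 1 then (a : ZMod (p ^ k)) else 1)}) =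
      p ^ ((k - 1) * (n * (n - 1) / 2)) *
        Nat.card {U : Matrix (Fin n) (Fin n) (ZMod p) //
          U * Matrix.diagonal (fun i : Fin n => if (i : ℕ) = n - 1 then (a : ZMod p) else 1) * Uᵀ =
            Matrix.diagonal (fun i : Fin n => if (i : ℕ) = n - 1 then (a : ZMod p) else 1)} ∧
    ((Nat.card {U : Matrix (Fin n) (Fin n) (ZMod (p ^ k)) //
        U * Matrix.diagonal (fun i : Fin n => if (i : ℕ) = n - 1 then (a : ZMod (p ^ k)) else 1) * Uᵀ =
          Matrix.diagonal (fun i : Fin n => if (i : ℕ) = n - 1 then (a : ZMod (p ^ k)) else 1)} : ℝ) /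
        (p : ℝ) ^ (k * (n * (n - 1) / 2)) =
      (Nat.card {U : Matrix (Fin n) (Fin n) (ZMod p) //
        U * Matrix.diagonal (fun i : Fin n => if (i : ℕ) = n - 1 then (a : ZMod p) else 1) * Uᵀ =
          Matrix.diagonal (fun i : Fin n => if (i : ℕ) = n - 1 then (a : ZMod p) else 1)} : ℝ) /
        (p : ℝ) ^ (n * (n - 1) / 2)) := by
  let S : Matrix (Fin n) (Fin n) ℤ := diagonal fun i => if (i : ℕ) = n - 1 then a else 1
  have hmap (m : ℕ) : S.map (Int.cast : ℤ → ZMod m) =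
      diagonal fun i : Fin n => if (i : ℕ) = n - 1 then (a : ZMod m) else 1 := by
    simp [S, diagonal_map, apply_ite]
  have hdet : IsCoprime S.det p := by
    rw [det_diagonal]
    exact IsCoprime.prod_left fun i _ => by split_ifs; exacts [ha, isCoprime_one_left]
  have hcount := card_isometry_zmod_prime_pow hp (diagonal_transpose _) hdet hk
  rw [hmap, hmap] at hcount
  refine ⟨hcount, ?_⟩
  obtain ⟨j, rfl⟩ := Nat.exists_eq_add_of_le' hk
  have hp0 : (p : ℝ) ≠ 0 := Nat.cast_ne_zero.mpr (Fact.out : p.Prime).ne_zero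
  rw [hcount, Nat.add_sub_cancel, add_mul, one_mul, pow_add, Nat.cast_mul, Nat.cast_pow,
    mul_div_mul_left _ _ (pow_ne_zero _ hp0)]

/-- Lemma 3.3 (lifting orthogonal groups): for `p` an odd prime, `n ≥ 1`, `k ≥ 1` and `a`
an integer coprime to `p`, letting `S` be the diagonal matrix `diag(1, …, 1, a)` over
`ℤ/p^kℤ` (resp. over `ℤ/pℤ`), the number of solutions of `U S Uᵀ = S` over `ℤ/p^kℤ` equals
`p^{(k−1)n(n−1)/2}` times the number of solutions over `ℤ/pℤ`; consequently the density
`#{U : U S Uᵀ = S} / p^{k·n(n−1)/2}` is independent of `k`. -/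
theorem orthogonal_group_lifting
    (p : ℕ) [Fact p.Prime] (hp : p ≠ 2) (n k : ℕ) (hn : 1 ≤ n) (hk : 1 ≤ k)
    (a : ℤ) (ha : IsCoprime a (p : ℤ)) :
    (Nat.card {U : Matrix (Fin n) (Fin n) (ZMod (p ^ k)) //
        U * Matrix.diagonal (fun i : Fin n => if (i : ℕ) = n - 1 then (a : ZMod (p ^ k)) else 1) * Uᵀ =
          Matrix.diagonal (fun i : Fin n => if (i : ℕ) = n - 1 then (a : ZMod (p ^ k)) else 1)}) =
      p ^ ((k - 1) * (n * (n - 1) / 2)) *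
        Nat.card {U : Matrix (Fin n) (Fin n) (ZMod p) //
          U * Matrix.diagonal (fun i : Fin n => if (i : ℕ) = n - 1 then (a : ZMod p) else 1) * Uᵀ =
            Matrix.diagonal (fun i : Fin n => if (i : ℕ) = n - 1 then (a : ZMod p) else 1)} ∧
    ((Nat.card {U : Matrix (Fin n) (Fin n) (ZMod (p ^ k)) //
        U * Matrix.diagonal (fun i : Fin n => if (i : ℕ) = n - 1 then (a : ZMod (p ^ k)) else 1) * Uᵀ =
          Matrix.diagonal (fun i : Fin n => if (i : ℕ) = n - 1 then (a : ZMod (p ^ k)) else 1)} : ℝ) /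
        (p : ℝ) ^ (k * (n * (n - 1) / 2)) =
      (Nat.card {U : Matrix (Fin n) (Fin n) (ZMod p) //
        U * Matrix.diagonal (fun i : Fin n => if (i : ℕ) = n - 1 then (a : ZMod p) else 1) * Uᵀ =
          Matrix.diagonal (fun i : Fin n => if (i : ℕ) = n - 1 then (a : ZMod p) else 1)} : ℝ) /
        (p : ℝ) ^ (n * (n - 1) / 2)) :=
  orthogonal_group_lifting_general p hp n k hk a ha
end
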